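/- Let G be a 3-colorable good graph with a fixed vertex v0 and associated partition V(G) = T_G ∪ M_G ∪ B_G, let e ∈ BAD_G be a non-edge of G, and let G' = G ∪ {e}, where G' is 3-colorable. Then B_{G'} = B_G (and consequently T_{G'} = T_G and M_{G'} = M_G). -/

import Mathlib

open SimpleGraph

/-- The graph obtained from `G` by adding the edge `e`. -/
def addEdge {V : Type*} (G : SimpleGraph V) (e : Sym2 V) : SimpleGraph V :=
  G ⊔ SimpleGraph.fromEdgeSet {e}

/-- Top vertices: the vertices receiving the same color as `v0` in every proper
3-coloring of `G`. -/
def topSet {V : Type*} (G : SimpleGraph V) (v0 : V) : Set V :=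
  {x | ∀ c : G.Coloring (Fin 3), c x = c v0}

/-- Middle vertices: the vertices outside the top having a neighbor in the top. -/
def midSet {V : Type*} (G : SimpleGraph V) (v0 : V) : Set V :=
  {x | x ∉ topSet G v0 ∧ ∃ t ∈ topSet G v0, G.Adj x t}

/-- Bottom vertices: all remaining vertices. -/
def botVertSet {V : Type*} (G : SimpleGraph V) (v0 : V) : Set V :=
  {x | x ∉ topSet G v0 ∧ x ∉ midSet G v0}

/-- The vertex set of `Γ_G(u)`, the connected component of `u` in the subgraph of `G`
induced on `{u} ∪ M_G`: all vertices reachable from `u` by a walk staying inside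
`{u} ∪ M_G`. -/
def gammaSet {V : Type*} (G : SimpleGraph V) (v0 u : V) : Set V :=
  {w | ∃ p : G.Walk u w, ∀ z ∈ p.support, z ∈ insert u (midSet G v0)}

/-- `m` and `m'` lie in the same middle-component of `G` (a connected component of the
subgraph induced on `M_G`): they are joined by a walk staying inside `M_G`. -/
def midReach {V : Type*} (G : SimpleGraph V) (v0 : V) (m m' : V) : Prop :=
  ∃ p : G.Walk m m', ∀ z ∈ p.support, z ∈ midSet G v0

/-- Property (P1): the bottom `B_G` is an independent set in `G`. -/
def prop1 {V : Type*} (G : SimpleGraph V) (v0 : V) : Prop :=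
  ∀ u ∈ botVertSet G v0, ∀ v ∈ botVertSet G v0, ¬ G.Adj u v

/-- Property (P2): every middle-component of `G` has at most one attached bottom
vertex. -/
def prop2 {V : Type*} (G : SimpleGraph V) (v0 : V) : Prop :=
  ∀ u v m m' : V, u ∈ botVertSet G v0 → v ∈ botVertSet G v0 →
    m ∈ midSet G v0 → m' ∈ midSet G v0 →
    G.Adj u m → G.Adj v m' → midReach G v0 m m' → u = v

/-- `G` is good: it satisfies properties (P1) and (P2). -/
def goodGraph {V : Type*} (G : SimpleGraph V) (v0 : V) : Prop :=
  prop1 G v0 ∧ prop2 G v0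

/-- The bad pairs `BAD_G`: the pairs `uv` such that there exist distinct bottom vertices
`x ≠ y` with `u ∈ V(Γ_G(x))` and `v ∈ V(Γ_G(y))`. -/
def badPair {V : Type*} (G : SimpleGraph V) (v0 : V) (e : Sym2 V) : Prop :=
  ∃ u v x y : V, e = s(u, v) ∧ x ∈ botVertSet G v0 ∧ y ∈ botVertSet G v0 ∧ x ≠ y ∧
    u ∈ gammaSet G v0 x ∧ v ∈ gammaSet G v0 y

/-- `G` is almost good: `G` is good, or some edge can be removed from `G` so that the
resulting graph is good. -/
def almostGood {V : Type*} (G : SimpleGraph V) (v0 : V) : Prop :=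
  goodGraph G v0 ∨ ∃ e ∈ G.edgeSet, goodGraph (G.deleteEdges {e}) v0

/-!
Adding an edge can only enlarge the top, so it suffices to show that a vertex `x` in the top of
`G + uv` is colored like `v0` by every 3-coloring `c` of `G`, where `u ∈ Γ_G(a)`, `v ∈ Γ_G(b)`
and `a ≠ b` are bottom vertices. In a good graph the sets `Γ_G(a)` and `Γ_G(b)` are disjoint,
and every edge leaving `Γ_G(b)` joins a middle vertex to a top vertex. Say `x ∉ Γ_G(b)`.
Recolor `Γ_G(b)` by a permuted coloring that gives `v0` the color `c v0` and `v` a color other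
than `c u`; the boundary edges stay proper because middle vertices never share the color of
`v0`. This is a 3-coloring of `G + uv` agreeing with `c` at `x` and `v0`, hence `c x = c v0`.
-/

namespace SimpleGraph

variable {V α : Type*} {G : SimpleGraph V}

lemma Coloring.exists_piecewise (d c : G.Coloring α) (S : Set V)
    (hS : ∀ ⦃p q⦄, G.Adj p q → p ∈ S → q ∉ S → d p ≠ c q) :
    ∃ f : G.Coloring α, (∀ w ∈ S, f w = d w) ∧ ∀ w ∉ S, f w = c w := by
  classical
  refine ⟨Coloring.mk (S.piecewise d c) fun {p q} hpq => ?_,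
    fun w hw => S.piecewise_eq_of_mem _ _ hw, fun w hw => S.piecewise_eq_of_notMem _ _ hw⟩
  by_cases hp : p ∈ S <;> by_cases hq : q ∈ S <;>
    simp only [Set.piecewise_eq_of_mem, Set.piecewise_eq_of_notMem, hp, hq, ne_eq,
      not_false_eq_true]
  · exact d.valid hpq
  · exact hS hpq hp hq
  · exact (hS hpq.symm hq hp).symm
  · exact c.valid hpq

variable {v0 : V}

lemma Coloring.eq_of_mem_topSet_addEdge {u v x : V}
    (hx : x ∈ topSet (addEdge G s(u, v)) v0) (c : G.Coloring (Fin 3)) (huv : c u ≠ c v) :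
    c x = c v0 := by
  refine hx (Coloring.mk c fun {p q} hpq => ?_)
  rcases hpq with hpq | hpq
  · exact c.valid hpq
  · rw [fromEdgeSet_adj, Set.mem_singleton_iff, Sym2.eq_iff] at hpq
    rcases hpq.1 with ⟨rfl, rfl⟩ | ⟨rfl, rfl⟩
    exacts [huv, huv.symm]

lemma Coloring.ne_of_mem_midSet {m : V} (hm : m ∈ midSet G v0) (c : G.Coloring (Fin 3)) :
    c m ≠ c v0 := by
  obtain ⟨-, t, ht, hmt⟩ := hm
  exact ht c ▸ c.valid hmt

end SimpleGraph

lemma Fin.exists_perm_apply_eq_apply_ne :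
    ∀ p q r s : Fin 3, p ≠ q → ∃ π : Equiv.Perm (Fin 3), π p = r ∧ π q ≠ s := by
  decide

section Partition

variable {V : Type*} {G : SimpleGraph V} {v0 : V}

lemma topSet_mono {H : SimpleGraph V} (hGH : G ≤ H) : topSet G v0 ⊆ topSet H v0 :=
  fun _ hx c => hx (c.comp (Hom.ofLE hGH))

lemma midSet_addEdge {u v : V} (htop : topSet (addEdge G s(u, v)) v0 = topSet G v0)
    (hu : u ∉ topSet G v0) (hv : v ∉ topSet G v0) :
    midSet (addEdge G s(u, v)) v0 = midSet G v0 := by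
  ext w
  simp only [midSet, Set.mem_ofPred_eq, htop]
  simp only [addEdge, sup_adj, fromEdgeSet_adj, Set.mem_singleton_iff, Sym2.eq_iff]
  refine and_congr_right fun _ => exists_congr fun t => and_congr_right fun ht =>
    or_iff_left_of_imp ?_
  rintro ⟨⟨rfl, rfl⟩ | ⟨rfl, rfl⟩, -⟩
  exacts [absurd ht hv, absurd ht hu]

lemma mem_midSet_of_mem_botVertSet_of_adj (h1 : prop1 G v0) {b w : V}
    (hb : b ∈ botVertSet G v0) (hbw : G.Adj b w) : w ∈ midSet G v0 := by
  have hw : w ∉ topSet G v0 := fun hw => hb.2 ⟨hb.1, w, hw, hbw⟩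
  by_contra hwm
  exact h1 b hb w ⟨hw, hwm⟩ hbw

end Partition

section MidComponents

variable {V : Type*} {G : SimpleGraph V} {v0 : V}

lemma midReach.symm {m m' : V} (h : midReach G v0 m m') : midReach G v0 m' m := by
  obtain ⟨p, hp⟩ := h
  exact ⟨p.reverse, fun z hz => hp z (by simpa using hz)⟩

lemma midReach.trans {m m' m'' : V} (h : midReach G v0 m m') (h' : midReach G v0 m' m'') :
    midReach G v0 m m'' := by
  obtain ⟨p, hp⟩ := h
  obtain ⟨q, hq⟩ := h'
  refine ⟨p.append q, fun z hz => ?_⟩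
  rcases (Walk.mem_support_append_iff p q).1 hz with hz | hz
  exacts [hp z hz, hq z hz]

lemma midReach.concat {m m' m'' : V} (h : midReach G v0 m m') (hadj : G.Adj m' m'')
    (hm'' : m'' ∈ midSet G v0) : midReach G v0 m m'' := by
  obtain ⟨p, hp⟩ := h
  refine ⟨p.concat hadj, fun z hz => ?_⟩
  rw [Walk.support_concat, List.mem_append, List.mem_singleton] at hz
  rcases hz with hz | rfl
  exacts [hp z hz, hm'']

lemma midReach_refl {m : V} (hm : m ∈ midSet G v0) : midReach G v0 m m :=
  ⟨Walk.nil, by simpa using hm⟩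

end MidComponents

section Gamma

variable {V : Type*} {G : SimpleGraph V} {v0 b : V}

lemma mem_gammaSet_self : b ∈ gammaSet G v0 b :=
  ⟨Walk.nil, by simp⟩

lemma eq_or_mem_midSet_of_mem_gammaSet {w : V} (hw : w ∈ gammaSet G v0 b) :
    w = b ∨ w ∈ midSet G v0 :=
  let ⟨p, hp⟩ := hw; hp w p.end_mem_support

lemma notMem_topSet_of_mem_gammaSet (hb : b ∉ topSet G v0) {w : V}
    (hw : w ∈ gammaSet G v0 b) : w ∉ topSet G v0 := by
  rcases eq_or_mem_midSet_of_mem_gammaSet hw with rfl | hw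
  exacts [hb, hw.1]

lemma mem_gammaSet_of_adj {w z : V} (hw : w ∈ gammaSet G v0 b) (hwz : G.Adj w z)
    (hz : z ∈ insert b (midSet G v0)) : z ∈ gammaSet G v0 b := by
  obtain ⟨p, hp⟩ := hw
  refine ⟨p.concat hwz, fun y hy => ?_⟩
  rw [Walk.support_concat, List.mem_append, List.mem_singleton] at hy
  rcases hy with hy | rfl
  exacts [hp y hy, hz]

lemma exists_adj_midReach_of_mem_gammaSet {w : V} (hw : w ∈ gammaSet G v0 b) (hwb : w ≠ b) :
    ∃ m ∈ midSet G v0, G.Adj b m ∧ midReach G v0 m w := by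
  obtain ⟨p, hp⟩ := hw
  suffices ∀ {x y : V} (q : G.Walk x y), (∀ z ∈ q.support, z ∈ insert b (midSet G v0)) →
      (x = b ∨ ∃ m ∈ midSet G v0, G.Adj b m ∧ midReach G v0 m x) →
      (y = b ∨ ∃ m ∈ midSet G v0, G.Adj b m ∧ midReach G v0 m y) from
    (this p hp (Or.inl rfl)).resolve_left hwb
  intro x y q
  induction q with
  | nil => exact fun _ h => h
  | @cons x y' y hxy q ih =>
    intro hq hx
    refine ih (fun z hz => hq z (List.mem_cons_of_mem _ hz)) ?_
    rcases hq y' (List.mem_cons_of_mem _ q.start_mem_support) with rfl | hy'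
    · exact Or.inl rfl
    rcases hx with rfl | ⟨m, hm, hbm, hmx⟩
    exacts [Or.inr ⟨y', hy', hxy, midReach_refl hy'⟩,
      Or.inr ⟨m, hm, hbm, hmx.concat hxy hy'⟩]

lemma gammaSet_disjoint (h2 : prop2 G v0) {a : V} (ha : a ∈ botVertSet G v0)
    (hb : b ∈ botVertSet G v0) (hab : a ≠ b) :
    Disjoint (gammaSet G v0 a) (gammaSet G v0 b) := by
  refine Set.disjoint_left.2 fun w hwa hwb => ?_
  rcases eq_or_mem_midSet_of_mem_gammaSet hwa with rfl | hw
  · rcases eq_or_mem_midSet_of_mem_gammaSet hwb with h | h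
    exacts [hab h, ha.2 h]
  obtain ⟨m, hm, ham, hmw⟩ :=
    exists_adj_midReach_of_mem_gammaSet hwa fun h => ha.2 (h ▸ hw)
  obtain ⟨m', hm', hbm', hm'w⟩ :=
    exists_adj_midReach_of_mem_gammaSet hwb fun h => hb.2 (h ▸ hw)
  exact hab (h2 a b m m' ha hb hm hm' ham hbm' (hmw.trans hm'w.symm))

lemma mem_topSet_of_adj_gammaSet (hgood : goodGraph G v0) (hb : b ∈ botVertSet G v0) {p q : V}
    (hp : p ∈ gammaSet G v0 b) (hpq : G.Adj p q) (hq : q ∉ gammaSet G v0 b) :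
    q ∈ topSet G v0 := by
  by_contra hqT
  rcases eq_or_mem_midSet_of_mem_gammaSet hp with rfl | hpM
  · exact hq (mem_gammaSet_of_adj hp hpq
      (Or.inr (mem_midSet_of_mem_botVertSet_of_adj hgood.1 hb hpq)))
  by_cases hqM : q ∈ midSet G v0
  · exact hq (mem_gammaSet_of_adj hp hpq (Or.inr hqM))
  obtain ⟨m, hm, hbm, hmp⟩ := exists_adj_midReach_of_mem_gammaSet hp fun h => hb.2 (h ▸ hpM)
  obtain rfl := hgood.2 b q m p hb ⟨hqT, hqM⟩ hm hpM hbm hpq.symm hmp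
  exact hq mem_gammaSet_self

lemma eq_of_mem_topSet_addEdge_of_notMem_gammaSet (hgood : goodGraph G v0)
    (hb : b ∈ botVertSet G v0) {u v x : V} (hu : u ∉ gammaSet G v0 b)
    (hv : v ∈ gammaSet G v0 b) (hx : x ∉ gammaSet G v0 b)
    (hxT : x ∈ topSet (addEdge G s(u, v)) v0) (c : G.Coloring (Fin 3)) : c x = c v0 := by
  obtain ⟨d, hd⟩ : ∃ d : G.Coloring (Fin 3), d v ≠ d v0 := by
    rcases eq_or_mem_midSet_of_mem_gammaSet hv with rfl | hvM
    · simpa [topSet] using hb.1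
    · exact ⟨c, c.ne_of_mem_midSet hvM⟩
  obtain ⟨π, hπv0, hπv⟩ :=
    Fin.exists_perm_apply_eq_apply_ne (d v0) (d v) (c v0) (c u) hd.symm
  have hv0 : v0 ∉ gammaSet G v0 b := fun h =>
    notMem_topSet_of_mem_gammaSet hb.1 h fun _ => rfl
  obtain ⟨f, hfS, hfSc⟩ := Coloring.exists_piecewise (G.recolorOfEquiv π d) c
    (gammaSet G v0 b) fun p q hpq hp hq => by
      have hqT := mem_topSet_of_adj_gammaSet hgood hb hp hpq hq
      have hpM : p ∈ midSet G v0 := (eq_or_mem_midSet_of_mem_gammaSet hp).resolve_left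
        fun h => hb.2 ⟨hb.1, q, hqT, h ▸ hpq⟩
      rw [hqT c, ← hπv0]
      exact π.injective.ne (d.ne_of_mem_midSet hpM)
  have hfuv : f u ≠ f v := by
    rw [hfSc u hu, hfS v hv]
    exact hπv.symm
  rw [← hfSc x hx, ← hfSc v0 hv0]
  exact Coloring.eq_of_mem_topSet_addEdge hxT f hfuv

end Gamma

theorem statement_14_general {V : Type*} (G : SimpleGraph V) (v0 : V)
    (hgood : goodGraph G v0)
    (e : Sym2 V) (hbad : badPair G v0 e) :
    botVertSet (addEdge G e) v0 = botVertSet G v0 ∧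
    topSet (addEdge G e) v0 = topSet G v0 ∧
    midSet (addEdge G e) v0 = midSet G v0 := by
  obtain ⟨u, v, a, b, rfl, ha, hb, hab, hu, hv⟩ := hbad
  have hdisj := gammaSet_disjoint hgood.2 ha hb hab
  have htop : topSet (addEdge G s(u, v)) v0 = topSet G v0 := by
    refine Set.Subset.antisymm (fun x hx c => ?_) (topSet_mono le_sup_left)
    by_cases hxb : x ∈ gammaSet G v0 b
    · rw [Sym2.eq_swap] at hx
      exact eq_of_mem_topSet_addEdge_of_notMem_gammaSet hgood ha
        (hdisj.notMem_of_mem_right hv) hu (hdisj.notMem_of_mem_right hxb) hx c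
    · exact eq_of_mem_topSet_addEdge_of_notMem_gammaSet hgood hb
        (hdisj.notMem_of_mem_left hu) hv hxb hx c
  have hmid := midSet_addEdge htop (notMem_topSet_of_mem_gammaSet ha.1 hu)
    (notMem_topSet_of_mem_gammaSet hb.1 hv)
  refine ⟨?_, htop, hmid⟩
  ext w
  simp only [botVertSet, Set.mem_ofPred_eq, htop, hmid]

/-- If `G` is a good 3-colorable graph, `e ∈ BAD_G` is a non-edge of `G`, and
`G' = G ∪ {e}` is 3-colorable, then `B_{G'} = B_G` (and consequently `T_{G'} = T_G`
and `M_{G'} = M_G`). -/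
theorem statement_14 {V : Type*} (G : SimpleGraph V) (v0 : V)
    (hcol : G.Colorable 3) (hgood : goodGraph G v0)
    (e : Sym2 V) (hd : ¬ e.IsDiag) (hne : e ∉ G.edgeSet) (hbad : badPair G v0 e)
    (hcol' : (addEdge G e).Colorable 3) :
    botVertSet (addEdge G e) v0 = botVertSet G v0 ∧
    topSet (addEdge G e) v0 = topSet G v0 ∧
    midSet (addEdge G e) v0 = midSet G v0 :=
  statement_14_general G v0 hgood e hbad
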